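/- Let α be a nonnegative random variable with finite expectation and continuous CDF F which is DMRL (its mean residual lifetime m is non-increasing), let T ≥ 0, c ≥ 0, k = 3T + c, r_H = α_H − k, and assume r_H > 0. Then the fixed point equation r = m(k + r) has a unique solution r* in (0, r_H), and r* is the unique global maximizer over [0,∞) of the supplier's expected payoff U(r) = (2/3)·r·E[(α − k − r)⁺]. -/

import Mathlib

open MeasureTheory Set

/-- The cumulative distribution function of a distribution `μ` on `ℝ`. -/
noncomputable def cdfR (μ : Measure ℝ) (t : ℝ) : ℝ := (μ (Iic t)).toReal

/-- The mean residual lifetime function `m(t) = E[α − t ∣ α > t]` (with value `0` when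
`P(α > t) = 0`, using the junk-value convention `x / 0 = 0`). -/
noncomputable def mrl (μ : Measure ℝ) (t : ℝ) : ℝ :=
  (∫ x, max (x - t) 0 ∂μ) / (μ (Ioi t)).toReal

/-!
Write `S(t) = P(α > t)` and `g(t) = E(α - t)⁺`, so that `g = m · S`. For `t₁ ≤ t₂` the increment
of `g` is squeezed, `(t₂ - t₁) S(t₂) ≤ g(t₁) - g(t₂) ≤ (t₂ - t₁) S(t₁)`, with both inequalities
strict when `S(t₂) < S(t₁)` (the upper one because `α` has no atoms).

A fixed point of `r = m(k + r)` is a zero of the continuous function `r S(k + r) - g(k + r)`,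
which is negative at `0` and, since DMRL keeps `m(k + b)` small, positive at some `b` with
`k + b < α_H`; it is unique because `r` increases while `m(k + r)` does not. The payoff is
`(2/3) r g(k + r)`, and comparing it at `r` with its value at the fixed point `r₀` through the
increment bounds, using `m(k + r) ≥ r₀` for `r < r₀` and `m(k + r) ≤ r₀` for `r > r₀`, shows that
`r₀` is the strict global maximiser.
-/

open ProbabilityTheory

namespace MeasureTheory

lemma integral_lt_integral_of_le_of_lt_on {α : Type*} [MeasurableSpace α] {ν : Measure α}
    {f g : α → ℝ} {s : Set α} (hf : Integrable f ν) (hg : Integrable g ν) (hle : f ≤ g)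
    (hs : ν s ≠ 0) (hlt : ∀ x ∈ s, f x < g x) : ∫ x, f x ∂ν < ∫ x, g x ∂ν := by
  rw [← sub_pos, ← integral_sub hg hf, integral_pos_iff_support_of_nonneg
    (fun x => sub_nonneg.2 (hle x)) (hg.sub hf)]
  exact (pos_iff_ne_zero.2 hs).trans_le
    (measure_mono fun x hx => (sub_pos.2 (hlt x hx)).ne')

end MeasureTheory

namespace ProbabilityTheory

variable {μ : Measure ℝ}

lemma continuous_cdf [IsProbabilityMeasure μ] [NullSingletonClass μ] : Continuous (cdf μ) := by
  refine continuous_iff_continuousAt.2 fun a => ?_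
  have hleft : Function.leftLim (cdf μ) a = cdf μ a := by
    have h := (cdf μ).measure_singleton a
    rw [measure_cdf, measure_singleton, eq_comm, ENNReal.ofReal_eq_zero, sub_nonpos] at h
    exact le_antisymm ((cdf μ).mono.leftLim_le le_rfl) h
  exact continuousAt_iff_continuous_left'_right'.2
    ⟨(cdf μ).mono.continuousWithinAt_Iio_iff_leftLim_eq.2 hleft,
      ((cdf μ).right_continuous a).mono Ioi_subset_Ici_self⟩

end ProbabilityTheory

lemma Antitone.eq_of_eq_apply_add {f : ℝ → ℝ} (hf : Antitone f) {k r s : ℝ}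
    (hr : r = f (k + r)) (hs : s = f (k + s)) : r = s := by
  rcases lt_trichotomy r s with h | h | h
  · linarith [hf (show k + r ≤ k + s by linarith)]
  · exact h
  · linarith [hf (show k + s ≤ k + r by linarith)]

section StopLoss

noncomputable def survival (μ : Measure ℝ) (t : ℝ) : ℝ := μ.real (Ioi t)

noncomputable def stopLoss (μ : Measure ℝ) (t : ℝ) : ℝ := ∫ x, max (x - t) 0 ∂μ

variable {μ : Measure ℝ}

lemma mrl_eq_stopLoss_div_survival (t : ℝ) : mrl μ t = stopLoss μ t / survival μ t := rfl

lemma survival_eq_one_sub_cdf [IsProbabilityMeasure μ] (t : ℝ) :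
    survival μ t = 1 - cdf μ t := by
  rw [survival, cdf_eq_real, ← compl_Iic, probReal_compl_eq_one_sub measurableSet_Iic]

lemma continuous_survival [IsProbabilityMeasure μ] [NullSingletonClass μ] :
    Continuous (survival μ) := by
  simp_rw [funext survival_eq_one_sub_cdf]
  exact continuous_const.sub continuous_cdf

lemma antitone_survival [IsFiniteMeasure μ] : Antitone (survival μ) :=
  fun _ _ h => measureReal_mono (Ioi_subset_Ioi h)

lemma survival_pos_of_lt_essSup [IsFiniteMeasure μ] {t : ℝ}
    (ht : (t : EReal) < essSup (fun x : ℝ => (x : EReal)) μ) : 0 < survival μ t := by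
  refine ENNReal.toReal_pos (fun h0 => ht.not_ge (essSup_le_of_ae_le _ ?_)) (measure_ne_top _ _)
  filter_upwards [measure_eq_zero_iff_ae_notMem.1 h0] with x hx
  exact EReal.coe_le_coe_iff.2 (not_lt.1 hx)

lemma measure_Ioc_ne_zero_of_survival_lt [IsFiniteMeasure μ] {t₁ t₂ : ℝ}
    (h : survival μ t₂ < survival μ t₁) : μ (Ioc t₁ t₂) ≠ 0 := by
  intro h0
  have hsub : Ioi t₁ ⊆ Ioc t₁ t₂ ∪ Ioi t₂ := fun x hx => by
    rcases le_or_gt x t₂ with h' | h'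
    exacts [Or.inl ⟨hx, h'⟩, Or.inr h']
  have := (measureReal_mono hsub).trans (measureReal_union_le (μ := μ) _ _)
  rw [measureReal_def _ (Ioc _ _), h0, ENNReal.toReal_zero, zero_add] at this
  exact h.not_ge this

lemma integrable_max_sub [IsFiniteMeasure μ] (hint : Integrable id μ) (t : ℝ) :
    Integrable (fun x => max (x - t) 0) μ :=
  (hint.sub (integrable_const t)).pos_part

lemma lipschitzWith_stopLoss [IsProbabilityMeasure μ] (hint : Integrable id μ) :
    LipschitzWith 1 (stopLoss μ) := by
  refine LipschitzWith.of_dist_le_mul fun s t => ?_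
  rw [Real.dist_eq, Real.dist_eq, stopLoss, stopLoss,
    ← integral_sub (integrable_max_sub hint s) (integrable_max_sub hint t), NNReal.coe_one, one_mul]
  calc ‖∫ x, (max (x - s) 0 - max (x - t) 0) ∂μ‖ ≤ |s - t| * μ.real univ :=
        norm_integral_le_of_norm_le_const (ae_of_all _ fun x => ?_)
    _ = |s - t| := by simp
  simpa [abs_sub_comm] using abs_max_sub_max_le_abs (x - s) (x - t) 0

lemma continuous_stopLoss [IsProbabilityMeasure μ] (hint : Integrable id μ) :
    Continuous (stopLoss μ) :=
  (lipschitzWith_stopLoss hint).continuous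

lemma stopLoss_pos [IsFiniteMeasure μ] (hint : Integrable id μ) {t : ℝ}
    (ht : 0 < survival μ t) : 0 < stopLoss μ t := by
  rw [stopLoss, integral_pos_iff_support_of_nonneg (f := fun x => max (x - t) 0)
    (fun x => le_max_right _ _) (integrable_max_sub hint t)]
  refine (ENNReal.toReal_pos_iff.1 ht).1.trans_le (measure_mono fun x hx => ?_)
  simpa [Function.mem_support, sub_pos] using hx

lemma stopLoss_eq_zero [IsFiniteMeasure μ] (hint : Integrable id μ) {t : ℝ}
    (ht : survival μ t = 0) : stopLoss μ t = 0 := by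
  rw [survival, measureReal_eq_zero_iff] at ht
  rw [stopLoss, integral_eq_zero_iff_of_nonneg (f := fun x => max (x - t) 0)
    (fun x => le_max_right _ _) (integrable_max_sub hint t)]
  filter_upwards [measure_eq_zero_iff_ae_notMem.1 ht] with x hx
  simpa [sub_nonpos] using hx

lemma stopLoss_eq_mrl_mul_survival [IsFiniteMeasure μ] (hint : Integrable id μ) (t : ℝ) :
    stopLoss μ t = mrl μ t * survival μ t := by
  rcases eq_or_ne (survival μ t) 0 with h | h
  · rw [h, mul_zero, stopLoss_eq_zero hint h]
  · rw [mrl_eq_stopLoss_div_survival, div_mul_cancel₀ _ h]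

lemma integral_indicator_Ioi_const [IsFiniteMeasure μ] (t d : ℝ) :
    ∫ x, (Ioi t).indicator (fun _ => d) x ∂μ = d * survival μ t := by
  rw [integral_indicator_const _ measurableSet_Ioi, smul_eq_mul, mul_comm, survival]

lemma stopLoss_le_mul_survival [IsFiniteMeasure μ] (hint : Integrable id μ) {b : ℝ}
    (hb : ∀ᵐ x ∂μ, x ≤ b) (t : ℝ) : stopLoss μ t ≤ (b - t) * survival μ t := by
  rw [← integral_indicator_Ioi_const]
  refine integral_mono_ae (integrable_max_sub hint t)
    ((integrable_const _).indicator measurableSet_Ioi) ?_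
  filter_upwards [hb] with x hx
  by_cases h : t < x
  · simp [indicator_of_mem (show x ∈ Ioi t from h), hx, h.le]
  · simp [not_lt.1 h]

lemma mrl_le_of_ae_le [IsFiniteMeasure μ] (hint : Integrable id μ) {b t : ℝ}
    (hb : ∀ᵐ x ∂μ, x ≤ b) (ht : t ≤ b) : mrl μ t ≤ b - t :=
  div_le_of_le_mul₀ measureReal_nonneg (sub_nonneg.2 ht) (stopLoss_le_mul_survival hint hb t)

lemma stopLoss_sub_stopLoss [IsFiniteMeasure μ] (hint : Integrable id μ) (t₁ t₂ : ℝ) :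
    stopLoss μ t₁ - stopLoss μ t₂ = ∫ x, (max (x - t₁) 0 - max (x - t₂) 0) ∂μ :=
  (integral_sub (integrable_max_sub hint t₁) (integrable_max_sub hint t₂)).symm

lemma max_sub_sub_max_sub_le_indicator {t₁ t₂ : ℝ} (h : t₁ ≤ t₂) (x : ℝ) :
    max (x - t₁) 0 - max (x - t₂) 0 ≤ (Ioi t₁).indicator (fun _ => t₂ - t₁) x := by
  simp only [indicator, mem_Ioi, max_def]
  split_ifs <;> linarith

lemma indicator_le_max_sub_sub_max_sub {t₁ t₂ : ℝ} (h : t₁ ≤ t₂) (x : ℝ) :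
    (Ioi t₂).indicator (fun _ => t₂ - t₁) x ≤ max (x - t₁) 0 - max (x - t₂) 0 := by
  simp only [indicator, mem_Ioi, max_def]
  split_ifs <;> linarith

lemma stopLoss_sub_le [IsFiniteMeasure μ] (hint : Integrable id μ) {t₁ t₂ : ℝ} (h : t₁ ≤ t₂) :
    stopLoss μ t₁ - stopLoss μ t₂ ≤ (t₂ - t₁) * survival μ t₁ := by
  rw [stopLoss_sub_stopLoss hint, ← integral_indicator_Ioi_const]
  exact integral_mono ((integrable_max_sub hint _).sub (integrable_max_sub hint _))
    ((integrable_const _).indicator measurableSet_Ioi) (max_sub_sub_max_sub_le_indicator h)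

lemma stopLoss_sub_lt [IsFiniteMeasure μ] [NullSingletonClass μ] (hint : Integrable id μ)
    {t₁ t₂ : ℝ} (h : t₁ ≤ t₂) (hS : survival μ t₂ < survival μ t₁) :
    stopLoss μ t₁ - stopLoss μ t₂ < (t₂ - t₁) * survival μ t₁ := by
  rw [stopLoss_sub_stopLoss hint, ← integral_indicator_Ioi_const]
  refine integral_lt_integral_of_le_of_lt_on (s := Ioo t₁ t₂)
    ((integrable_max_sub hint _).sub (integrable_max_sub hint _))
    ((integrable_const _).indicator measurableSet_Ioi) (max_sub_sub_max_sub_le_indicator h)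
    ((measure_congr Ioo_ae_eq_Ioc).trans_ne (measure_Ioc_ne_zero_of_survival_lt hS))
    fun x hx => ?_
  rw [indicator_of_mem (show x ∈ Ioi t₁ from hx.1), max_eq_left (sub_nonneg.2 hx.1.le),
    max_eq_right (sub_nonpos.2 hx.2.le)]
  linarith [hx.2]

lemma mul_survival_le_stopLoss_sub [IsFiniteMeasure μ] (hint : Integrable id μ) {t₁ t₂ : ℝ}
    (h : t₁ ≤ t₂) : (t₂ - t₁) * survival μ t₂ ≤ stopLoss μ t₁ - stopLoss μ t₂ := by
  rw [stopLoss_sub_stopLoss hint, ← integral_indicator_Ioi_const]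
  exact integral_mono ((integrable_const _).indicator measurableSet_Ioi)
    ((integrable_max_sub hint _).sub (integrable_max_sub hint _))
    (indicator_le_max_sub_sub_max_sub h)

lemma mul_survival_lt_stopLoss_sub [IsFiniteMeasure μ] (hint : Integrable id μ) {t₁ t₂ : ℝ}
    (h : t₁ ≤ t₂) (hS : survival μ t₂ < survival μ t₁) :
    (t₂ - t₁) * survival μ t₂ < stopLoss μ t₁ - stopLoss μ t₂ := by
  rw [stopLoss_sub_stopLoss hint, ← integral_indicator_Ioi_const]
  refine integral_lt_integral_of_le_of_lt_on ((integrable_const _).indicator measurableSet_Ioi)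
    ((integrable_max_sub hint _).sub (integrable_max_sub hint _))
    (indicator_le_max_sub_sub_max_sub h) (measure_Ioc_ne_zero_of_survival_lt hS) fun x hx => ?_
  rw [indicator_of_notMem (show x ∉ Ioi t₂ from hx.2.not_gt), max_eq_left (sub_nonneg.2 hx.1.le),
    max_eq_right (sub_nonpos.2 hx.2)]
  linarith [hx.1]

lemma exists_mrl_add_lt [IsFiniteMeasure μ] (hint : Integrable id μ) (hdmrl : Antitone (mrl μ))
    {k : ℝ} (hk : (k : EReal) < essSup (fun x : ℝ => (x : EReal)) μ) :
    ∃ b > 0, ((k + b : ℝ) : EReal) < essSup (fun x : ℝ => (x : EReal)) μ ∧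
      mrl μ (k + b) < b := by
  have hae : ∀ᵐ x : ℝ ∂μ, (x : EReal) ≤ essSup (fun x : ℝ => (x : EReal)) μ :=
    ae_le_essSup (μ := μ) (f := fun x : ℝ => (x : EReal))
  generalize essSup (fun x : ℝ => (x : EReal)) μ = A at hk hae ⊢
  induction A using EReal.rec with
  | bot => exact absurd hk not_lt_bot
  | coe a =>
    have hka : k < a := EReal.coe_lt_coe_iff.1 hk
    -- `m(k + b) ≤ a - (k + b) = (a - k) / 4 < b`
    refine ⟨3 / 4 * (a - k), by linarith, EReal.coe_lt_coe_iff.2 (by linarith), ?_⟩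
    have := mrl_le_of_ae_le hint (hae.mono fun x hx => EReal.coe_le_coe_iff.1 hx)
      (show k + 3 / 4 * (a - k) ≤ a by linarith)
    linarith
  | top =>
    refine ⟨max (mrl μ k) 0 + 1, by positivity, EReal.coe_lt_top _, ?_⟩
    have := hdmrl (show k ≤ k + (max (mrl μ k) 0 + 1) by linarith [le_max_right (mrl μ k) 0])
    linarith [le_max_left (mrl μ k) 0]

lemma exists_eq_mrl_add [IsProbabilityMeasure μ] [NullSingletonClass μ] (hint : Integrable id μ)
    (hdmrl : Antitone (mrl μ)) {k : ℝ}
    (hk : (k : EReal) < essSup (fun x : ℝ => (x : EReal)) μ) :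
    ∃ r₀ > 0, ((k + r₀ : ℝ) : EReal) < essSup (fun x : ℝ => (x : EReal)) μ ∧
      r₀ = mrl μ (k + r₀) := by
  obtain ⟨b, hb, hbA, hmb⟩ := exists_mrl_add_lt hint hdmrl hk
  have hS {r : ℝ} (hr : r ≤ b) : 0 < survival μ (k + r) :=
    (survival_pos_of_lt_essSup hbA).trans_le (antitone_survival (by linarith))
  set φ : ℝ → ℝ := fun r => r * survival μ (k + r) - stopLoss μ (k + r)
  have hφ : Continuous φ := by
    have := continuous_survival (μ := μ)
    have := continuous_stopLoss hint
    fun_prop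
  have hφ0 : φ 0 < 0 := by
    simpa [φ] using stopLoss_pos hint (survival_pos_of_lt_essSup hk)
  have hφb : 0 < φ b := by
    simp only [φ, stopLoss_eq_mrl_mul_survival hint (k + b)]
    nlinarith [hS le_rfl]
  obtain ⟨r₀, ⟨hr₀0, hr₀b⟩, hφr₀⟩ :=
    intermediate_value_Icc hb.le hφ.continuousOn ⟨hφ0.le, hφb.le⟩
  have hr₀ : 0 < r₀ := hr₀0.lt_of_ne (by rintro rfl; exact hφ0.ne hφr₀)
  refine ⟨r₀, hr₀, hbA.trans_le' (EReal.coe_le_coe_iff.2 (by linarith)), ?_⟩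
  rw [mrl_eq_stopLoss_div_survival, eq_div_iff (hS hr₀b).ne']
  exact sub_eq_zero.1 hφr₀

lemma mul_stopLoss_lt_of_lt_of_eq_mrl [IsFiniteMeasure μ] [NullSingletonClass μ]
    (hint : Integrable id μ) (hdmrl : Antitone (mrl μ)) {k r r₀ : ℝ} (hr : 0 ≤ r) (hrr₀ : r < r₀)
    (hfix : r₀ = mrl μ (k + r₀)) (hS : 0 < survival μ (k + r₀)) :
    r * stopLoss μ (k + r) < r₀ * stopLoss μ (k + r₀) := by
  have ht : k + r ≤ k + r₀ := by linarith
  have hg₀ : stopLoss μ (k + r₀) = r₀ * survival μ (k + r₀) := by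
    rw [stopLoss_eq_mrl_mul_survival hint, ← hfix]
  have hg : r₀ * survival μ (k + r) ≤ stopLoss μ (k + r) := by
    rw [stopLoss_eq_mrl_mul_survival hint]
    exact mul_le_mul_of_nonneg_right (hfix ▸ hdmrl ht) measureReal_nonneg
  have hsurv : r * survival μ (k + r) < r₀ * survival μ (k + r₀) := by
    rcases (antitone_survival (μ := μ) ht).lt_or_eq with hlt | heq
    · linarith [stopLoss_sub_lt hint ht hlt]
    · rw [← heq]
      exact mul_lt_mul_of_pos_right hrr₀ hS
  calc r * stopLoss μ (k + r)
      ≤ r * (stopLoss μ (k + r₀) + (r₀ - r) * survival μ (k + r)) := by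
        gcongr
        linarith [stopLoss_sub_le hint ht]
    _ = r * stopLoss μ (k + r₀) + (r₀ - r) * (r * survival μ (k + r)) := by ring
    _ < r * stopLoss μ (k + r₀) + (r₀ - r) * (r₀ * survival μ (k + r₀)) := by gcongr
    _ = r₀ * stopLoss μ (k + r₀) := by rw [hg₀]; ring

lemma mul_stopLoss_lt_of_eq_mrl_of_lt [IsFiniteMeasure μ]
    (hint : Integrable id μ) (hdmrl : Antitone (mrl μ)) {k r r₀ : ℝ} (hr₀ : 0 < r₀)
    (hr₀r : r₀ < r) (hfix : r₀ = mrl μ (k + r₀)) (hS : 0 < survival μ (k + r₀)) :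
    r * stopLoss μ (k + r) < r₀ * stopLoss μ (k + r₀) := by
  have ht : k + r₀ ≤ k + r := by linarith
  have hg₀ : stopLoss μ (k + r₀) = r₀ * survival μ (k + r₀) := by
    rw [stopLoss_eq_mrl_mul_survival hint, ← hfix]
  have hg : stopLoss μ (k + r) ≤ r₀ * survival μ (k + r) := by
    rw [stopLoss_eq_mrl_mul_survival hint]
    exact mul_le_mul_of_nonneg_right (hfix ▸ hdmrl ht) measureReal_nonneg
  rcases (antitone_survival (μ := μ) ht).lt_or_eq with hlt | heq
  · calc r * stopLoss μ (k + r)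
        = r₀ * stopLoss μ (k + r) + (r - r₀) * stopLoss μ (k + r) := by ring
      _ < r₀ * (stopLoss μ (k + r₀) - (r - r₀) * survival μ (k + r))
          + (r - r₀) * (r₀ * survival μ (k + r)) := by
        refine add_lt_add_of_lt_of_le (mul_lt_mul_of_pos_left ?_ hr₀)
          (mul_le_mul_of_nonneg_left hg (by linarith))
        linarith [mul_survival_lt_stopLoss_sub hint ht hlt]
      _ = r₀ * stopLoss μ (k + r₀) := by ring
  · have hlow := mul_survival_le_stopLoss_sub hint ht
    have hup := stopLoss_sub_le hint ht
    rw [heq] at hlow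
    have hg' : stopLoss μ (k + r) = (2 * r₀ - r) * survival μ (k + r₀) := by linarith
    calc r * stopLoss μ (k + r)
        = r₀ * stopLoss μ (k + r₀) - (r - r₀) ^ 2 * survival μ (k + r₀) := by
          rw [hg', hg₀]; ring
      _ < r₀ * stopLoss μ (k + r₀) := by
          linarith [mul_pos (pow_pos (sub_pos.2 hr₀r) 2) hS]

end StopLoss

theorem stmt10_general (μ : Measure ℝ) [IsProbabilityMeasure μ]
    (hint : Integrable id μ) (hcont : ∀ t : ℝ, μ {t} = 0)
    (hdmrl : Antitone (mrl μ))
    (k : ℝ)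
    (rH : EReal) (hrH : rH = essSup (fun x : ℝ => (x : EReal)) μ - (k : EReal))
    (hrHpos : 0 < rH)
    (U : ℝ → ℝ) (hU : ∀ r : ℝ, U r = (2/3) * r * ∫ x, max (x - k - r) 0 ∂μ) :
    ∃ rstar : ℝ, (0 < rstar ∧ (rstar : EReal) < rH) ∧ rstar = mrl μ (k + rstar) ∧
      (∀ r : ℝ, 0 < r → (r : EReal) < rH → r = mrl μ (k + r) → r = rstar) ∧
      (∀ r : ℝ, 0 ≤ r → r ≠ rstar → U r < U rstar) := by
  have : NullSingletonClass μ := ⟨hcont⟩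
  obtain ⟨r₀, hr₀, hr₀A, hfix⟩ := exists_eq_mrl_add hint hdmrl (EReal.sub_pos.1 (hrH ▸ hrHpos))
  have hU' (r : ℝ) : U r = 2 / 3 * (r * stopLoss μ (k + r)) := by
    simp only [hU, stopLoss, sub_sub, mul_assoc]
  refine ⟨r₀, ⟨hr₀, ?_⟩, hfix, fun r _ _ hr => hdmrl.eq_of_eq_apply_add hr hfix,
    fun r hr hne => ?_⟩
  · rw [hrH, EReal.lt_sub_iff_add_lt (.inl (EReal.coe_ne_bot k)) (.inl (EReal.coe_ne_top k)),
      ← EReal.coe_add, add_comm]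
    exact hr₀A
  · have hS := survival_pos_of_lt_essSup hr₀A
    rw [hU', hU']
    refine mul_lt_mul_of_pos_left ?_ (by norm_num)
    rcases hne.lt_or_gt with h | h
    · exact mul_stopLoss_lt_of_lt_of_eq_mrl hint hdmrl hr h hfix hS
    · exact mul_stopLoss_lt_of_eq_mrl_of_lt hint hdmrl hr₀ h hfix hS

/-- If `α` is DMRL (its mean residual lifetime is non-increasing), then the
fixed point equation `r = m(k + r)` has a unique solution `r*` in `(0, r_H)`, and `r*` is
the unique global maximizer over `[0,∞)` of `U(r) = (2/3)·r·E[(α − k − r)⁺]`. -/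
theorem stmt10 (μ : Measure ℝ) [IsProbabilityMeasure μ]
    (hnonneg : μ (Iio 0) = 0) (hint : Integrable id μ) (hcont : ∀ t : ℝ, μ {t} = 0)
    (hdmrl : Antitone (mrl μ))
    (T c : ℝ) (hT : 0 ≤ T) (hc : 0 ≤ c) (k : ℝ) (hk : k = 3*T + c)
    (rH : EReal) (hrH : rH = essSup (fun x : ℝ => (x : EReal)) μ - (k : EReal))
    (hrHpos : 0 < rH)
    (U : ℝ → ℝ) (hU : ∀ r : ℝ, U r = (2/3) * r * ∫ x, max (x - k - r) 0 ∂μ) :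
    ∃ rstar : ℝ, (0 < rstar ∧ (rstar : EReal) < rH) ∧ rstar = mrl μ (k + rstar) ∧
      (∀ r : ℝ, 0 < r → (r : EReal) < rH → r = mrl μ (k + r) → r = rstar) ∧
      (∀ r : ℝ, 0 ≤ r → r ≠ rstar → U r < U rstar) :=
  stmt10_general μ hint hcont hdmrl k rH hrH hrHpos U hU
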